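/- Let C be a smooth projective curve of genus g over an algebraically closed field and S = {P} a single point. Then the Euclidean minimum M_S(K) equals the index of speciality μ(P), which is the largest Weierstrass gap of P; in particular g ≤ M_S(K) ≤ 2g - 1 when g ≥ 1. -/

import Mathlib

open scoped Classical

/-- An abstract model of a smooth projective (geometrically irreducible) curve over `k`:
`K` is its function field, `Point` its set of closed points, `v P` the normalized discrete
valuation at `P`, `Ω` the one-dimensional `K`-vector space of rational differential forms
with order function `ordω` and differential `d`, `genus` the genus, `Kcan` the divisor of a
fixed nonzero differential (a canonical divisor), and `ℓ D` the dimension of the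
Riemann-Roch space `L(D)`.  The axioms record the standard facts: valuations are
multiplicative and satisfy the ultrametric inequality, a nonzero function has a degree-zero
divisor of finite support, constants have no zeros or poles, `ordω` shifts by `v` under
`K`-scaling, `deg Kcan = 2g - 2`, the Riemann-Roch theorem, the characterization of `ℓ` as
the dimension of `L(D)`, and Serre duality identifying `ℓ(Kcan - D)` with
`dim Ω(-D)` (so `ℓ (Kcan - D) = 0` iff there is no nonzero differential `ω` with
`div ω ≥ D`). -/
structure AlgCurve (k : Type) [Field k] where
  K : Type
  [fieldK : Field K]
  [algK : Algebra k K]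
  Point : Type
  v : Point → K → ℤ
  Ω : Type
  [acgΩ : AddCommGroup Ω]
  [modΩ : Module K Ω]
  ordω : Point → Ω → ℤ
  d : K → Ω
  genus : ℕ
  Kcan : Point →₀ ℤ
  ℓ : (Point →₀ ℤ) → ℕ
  v_mul : ∀ P (x y : K), x ≠ 0 → y ≠ 0 → v P (x * y) = v P x + v P y
  v_add : ∀ P (x y : K), x ≠ 0 → y ≠ 0 → x + y ≠ 0 → min (v P x) (v P y) ≤ v P (x + y)
  v_finite : ∀ x : K, x ≠ 0 → (Function.support fun P => v P x).Finite
  v_sum_zero : ∀ x : K, x ≠ 0 → ∑ᶠ P, v P x = 0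
  v_const : ∀ c : k, c ≠ 0 → ∀ P, v P (algebraMap k K c) = 0
  v_uniformizer : ∀ P, ∃ x : K, x ≠ 0 ∧ v P x = 1
  ordω_smul : ∀ P (x : K) (ω : Ω), x ≠ 0 → ω ≠ 0 → ordω P (x • ω) = v P x + ordω P ω
  exists_canform : ∃ ω : Ω, ω ≠ 0 ∧ ∀ P, ordω P ω = Kcan P
  d_add : ∀ x y : K, d (x + y) = d x + d y
  d_mul : ∀ x y : K, d (x * y) = x • d y + y • d x
  d_const : ∀ c : k, d (algebraMap k K c) = 0
  deg_Kcan : (Kcan.sum fun _ n => n) = 2 * (genus : ℤ) - 2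
  riemannRoch : ∀ D : Point →₀ ℤ,
    (ℓ D : ℤ) - (ℓ (Kcan - D) : ℤ) = (D.sum fun _ n => n) + 1 - genus
  ℓ_spec : ∀ D : Point →₀ ℤ, ∀ n : ℕ, n ≤ ℓ D ↔
    ∃ s : Finset K, s.card = n ∧ LinearIndependent k (fun x : s => (x : K)) ∧
      ∀ x ∈ s, x ≠ 0 ∧ ∀ P, 0 ≤ v P x + D P
  serre : ∀ D : Point →₀ ℤ,
    ℓ (Kcan - D) = 0 ↔ ¬ ∃ ω : Ω, ω ≠ 0 ∧ ∀ P, D P ≤ ordω P ω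

attribute [instance] AlgCurve.fieldK AlgCurve.algK AlgCurve.acgΩ AlgCurve.modΩ

namespace AlgCurve

variable {k : Type} [Field k]

/-- The degree of a divisor. -/
def deg {C : AlgCurve k} (D : C.Point →₀ ℤ) : ℤ := D.sum fun _ n => n

/-- `Ω(-D) = 0`: there is no nonzero differential form `ω` with `div ω ≥ D`. -/
def OmegaZero (C : AlgCurve k) (D : C.Point →₀ ℤ) : Prop :=
  ¬ ∃ ω : C.Ω, ω ≠ 0 ∧ ∀ P, D P ≤ C.ordω P ω

/-- The index of speciality `μ(S)` of a finite set `S` of points: the minimal degree of a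
divisor supported on `S` with `Ω(-D) = 0`. -/
noncomputable def μ (C : AlgCurve k) (S : Set C.Point) : ℤ :=
  sInf {n : ℤ | ∃ D : C.Point →₀ ℤ, ↑D.support ⊆ S ∧ C.OmegaZero D ∧ deg D = n}

/-- Membership in the ring `O_S` of rational functions regular outside `S`. -/
def MemOS (C : AlgCurve k) (S : Set C.Point) (x : C.K) : Prop :=
  x ≠ 0 → ∀ P, P ∉ S → 0 ≤ C.v P x

/-- `deg_S x = -∑_{P ∈ S} v_P(x)` (meaningful for `x ≠ 0`). -/
noncomputable def degS (C : AlgCurve k) (S : Set C.Point) (x : C.K) : ℤ :=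
  -∑ᶠ P ∈ S, C.v P x

/-- `n` is a Weierstrass gap of `P`: `ℓ(nP) = ℓ((n-1)P)`. -/
def IsGap (C : AlgCurve k) (P : C.Point) (n : ℤ) : Prop :=
  C.ℓ (Finsupp.single P n) = C.ℓ (Finsupp.single P (n - 1))

end AlgCurve

/-!
Functions regular outside `P` are the elements of the Riemann-Roch spaces `L(nP)`. Since
`Ω(-nP) = 0` is upward closed in `n`, `μ = μ({P})` is the least `n` with `Ω(-nP) = 0`, and
Riemann-Roch gives `ℓ(nP) = n + 1 - g` for `n ≥ μ` but `ℓ((μ-1)P) = ℓ(μP)`; so `μ` is the largest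
gap, and degree counting gives `g ≤ μ ≤ 2g - 1`.

Upper bound: when `D₁ ⊓ D₂` is non-special, `L(D₁) + L(D₂) = L(D₁ ⊔ D₂)`, because both sides have
dimension `deg D₁ + deg D₂ - deg (D₁ ⊓ D₂) + 1 - g`. Taking for `D₁` a multiple of `P` and for
`D₂` the polar divisor of `x` with its `P`-coefficient replaced by `μ`, this writes `x = y + z`
with `y ∈ O_S` and `v_P(z) ≥ -μ`.

Lower bound: take `x` with `v_P(x) = -μ`. As `L((μ-1)P) = L(μP)`, no `y ∈ O_S` has
`v_P(y) = -μ`, so the ultrametric inequality forces `v_P(x - y) ≤ -μ` for every `y ∈ O_S`.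
-/

namespace AlgCurve

variable {k : Type} [Field k] {C : AlgCurve k}

section Valuation

variable {P : C.Point}

lemma v_one : C.v P 1 = 0 := by
  have h := C.v_mul P 1 1 one_ne_zero one_ne_zero
  rw [one_mul] at h
  omega

lemma v_neg {x : C.K} (hx : x ≠ 0) : C.v P (-x) = C.v P x := by
  have hm1 : (-1 : C.K) ≠ 0 := neg_ne_zero.mpr one_ne_zero
  have hsq := C.v_mul P (-1) (-1) hm1 hm1
  have hx' := C.v_mul P (-1) x hm1 hx
  rw [neg_one_mul, neg_neg, v_one] at hsq
  rw [neg_one_mul] at hx'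
  omega

lemma v_inv {x : C.K} (hx : x ≠ 0) : C.v P x⁻¹ = -C.v P x := by
  have h := C.v_mul P x x⁻¹ hx (inv_ne_zero hx)
  rw [mul_inv_cancel₀ hx, v_one] at h
  omega

lemma v_smul {c : k} (hc : c ≠ 0) {x : C.K} (hx : x ≠ 0) : C.v P (c • x) = C.v P x := by
  rw [Algebra.smul_def, C.v_mul P _ x ((map_ne_zero _).mpr hc) hx, C.v_const c hc P, zero_add]

lemma v_add_eq_left {x y : C.K} (hx : x ≠ 0) (hy : y ≠ 0) (h : C.v P x < C.v P y) :
    x + y ≠ 0 ∧ C.v P (x + y) = C.v P x := by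
  have hxy : x + y ≠ 0 := by
    intro h0
    rw [eq_neg_of_add_eq_zero_right h0, v_neg hx] at h
    exact lt_irrefl _ h
  have hle := C.v_add P x y hx hy hxy
  have hge := C.v_add P (x + y) (-y) hxy (neg_ne_zero.mpr hy) (by simpa using hx)
  rw [add_neg_cancel_right, v_neg hy] at hge
  exact ⟨hxy, by omega⟩

lemma exists_v_eq (P : C.Point) (n : ℤ) : ∃ x : C.K, x ≠ 0 ∧ C.v P x = n := by
  obtain ⟨t, ht0, ht1⟩ := C.v_uniformizer P
  induction n using Int.induction_on with
  | zero => exact ⟨1, one_ne_zero, v_one⟩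
  | succ n ih =>
    obtain ⟨x, hx0, hx⟩ := ih
    exact ⟨x * t, mul_ne_zero hx0 ht0, by rw [C.v_mul P x t hx0 ht0, hx, ht1]⟩
  | pred n ih =>
    obtain ⟨x, hx0, hx⟩ := ih
    refine ⟨x * t⁻¹, mul_ne_zero hx0 (inv_ne_zero ht0), ?_⟩
    rw [C.v_mul P x _ hx0 (inv_ne_zero ht0), hx, v_inv ht0, ht1]
    ring

end Valuation

lemma deg_single (P : C.Point) (n : ℤ) : deg (Finsupp.single P n) = n :=
  Finsupp.sum_single_index rfl

lemma deg_add (A B : C.Point →₀ ℤ) : deg (A + B) = deg A + deg B :=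
  Finsupp.sum_add_index' (fun _ => rfl) (fun _ _ _ => rfl)

lemma deg_sub (A B : C.Point →₀ ℤ) : deg (A - B) = deg A - deg B :=
  Finsupp.sum_sub_index (fun _ _ _ => rfl)

lemma deg_sup_add_deg_inf (A B : C.Point →₀ ℤ) :
    deg (A ⊔ B) + deg (A ⊓ B) = deg A + deg B := by
  rw [← deg_add, ← deg_add]
  congr 1
  ext Q
  simp only [Finsupp.add_apply, Finsupp.sup_apply, Finsupp.inf_apply]
  exact max_add_min _ _

lemma finsum_eq_deg (D : C.Point →₀ ℤ) : ∑ᶠ Q, D Q = deg D :=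
  finsum_eq_finsetSum_of_support_subset _ (by simp)

def L (C : AlgCurve k) (D : C.Point →₀ ℤ) : Submodule k C.K where
  carrier := {x | x = 0 ∨ ∀ P, 0 ≤ C.v P x + D P}
  zero_mem' := Or.inl rfl
  add_mem' := by
    rintro x y (rfl | hx) (rfl | hy)
    · simp
    · simpa using Or.inr hy
    · simpa using Or.inr hx
    by_cases hx0 : x = 0
    · simpa [hx0] using Or.inr hy
    by_cases hy0 : y = 0
    · simpa [hy0] using Or.inr hx
    by_cases hxy : x + y = 0
    · exact Or.inl hxy
    refine Or.inr fun P => ?_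
    have := C.v_add P x y hx0 hy0 hxy
    have := hx P
    have := hy P
    omega
  smul_mem' := by
    rintro c x (rfl | hx)
    · simp
    by_cases hc : c = 0
    · simp [hc]
    by_cases hx0 : x = 0
    · simp [hx0]
    exact Or.inr fun P => by simpa only [v_smul hc hx0] using hx P

lemma mem_L {D : C.Point →₀ ℤ} {x : C.K} :
    x ∈ C.L D ↔ x = 0 ∨ ∀ P, 0 ≤ C.v P x + D P := Iff.rfl

lemma L_mono {D D' : C.Point →₀ ℤ} (h : D ≤ D') : C.L D ≤ C.L D' := by
  rintro x (rfl | hx)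
  · exact Or.inl rfl
  · exact Or.inr fun P => (hx P).trans (by have := h P; omega)

lemma L_inf (D D' : C.Point →₀ ℤ) : C.L (D ⊓ D') = C.L D ⊓ C.L D' := by
  ext x
  simp only [Submodule.mem_inf, mem_L, Finsupp.inf_apply]
  by_cases hx : x = 0
  · simp [hx]
  simp only [hx, false_or, ← forall_and]
  exact forall_congr' fun P => by omega

lemma card_le_ℓ {D : C.Point →₀ ℤ} {s : Finset C.K} (hs : LinearIndepOn k id (s : Set C.K))
    (hsD : (s : Set C.K) ⊆ C.L D) : s.card ≤ C.ℓ D := by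
  refine (C.ℓ_spec D s.card).mpr ⟨s, rfl, hs, fun x hx => ?_⟩
  have hx0 : x ≠ 0 := hs.ne_zero hx
  exact ⟨hx0, (hsD hx).resolve_left hx0⟩

lemma exists_basis_L (D : C.Point →₀ ℤ) :
    ∃ s : Finset C.K, LinearIndepOn k id (s : Set C.K) ∧ s.card = C.ℓ D ∧
      Submodule.span k s = C.L D := by
  obtain ⟨s, hcard, hs, hmem⟩ := (C.ℓ_spec D (C.ℓ D)).mp le_rfl
  have hsD : (s : Set C.K) ⊆ C.L D := fun x hx => Or.inr (hmem x hx).2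
  refine ⟨s, hs, hcard, le_antisymm (Submodule.span_le.mpr hsD) fun x hx => ?_⟩
  by_contra hxs
  have hxs' : x ∉ s := fun h => hxs (Submodule.subset_span h)
  have hins : LinearIndepOn k id ((insert x s : Finset C.K) : Set C.K) := by
    rw [Finset.coe_insert]
    exact (linearIndepOn_id_insert hxs').mpr ⟨hs, hxs⟩
  have := card_le_ℓ hins (by rw [Finset.coe_insert]; exact Set.insert_subset hx hsD)
  rw [Finset.card_insert_of_notMem hxs'] at this
  omega

instance (D : C.Point →₀ ℤ) : FiniteDimensional k (C.L D) := by
  obtain ⟨s, -, -, hspan⟩ := exists_basis_L (C := C) D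
  rw [← hspan]
  exact FiniteDimensional.span_finset k s

lemma finrank_L (D : C.Point →₀ ℤ) : Module.finrank k (C.L D) = C.ℓ D := by
  obtain ⟨s, hs, hcard, hspan⟩ := exists_basis_L (C := C) D
  rw [← hspan, finrank_span_finset_eq_card hs, hcard]

lemma ℓ_mono {D D' : C.Point →₀ ℤ} (h : D ≤ D') : C.ℓ D ≤ C.ℓ D' := by
  rw [← finrank_L, ← finrank_L]
  exact Submodule.finrank_mono (L_mono h)

lemma L_eq_of_ℓ_eq {D D' : C.Point →₀ ℤ} (h : D ≤ D') (hℓ : C.ℓ D = C.ℓ D') :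
    C.L D = C.L D' :=
  Submodule.eq_of_le_of_finrank_eq (L_mono h) (by rw [finrank_L, finrank_L, hℓ])

lemma deg_nonneg_of_mem_L {D : C.Point →₀ ℤ} {x : C.K} (hx0 : x ≠ 0) (hx : x ∈ C.L D) :
    0 ≤ deg D := by
  have hD : (Function.support fun Q => D Q).Finite := D.hasFiniteSupport
  have := finsum_nonneg fun Q => (hx.resolve_left hx0) Q
  rwa [finsum_add_distrib (C.v_finite x hx0) hD, C.v_sum_zero x hx0, finsum_eq_deg, zero_add]
    at this

lemma ℓ_eq_zero_of_deg_neg {D : C.Point →₀ ℤ} (h : deg D < 0) : C.ℓ D = 0 := by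
  rw [← finrank_L, Submodule.finrank_eq_zero, Submodule.eq_bot_iff]
  intro x hx
  by_contra hx0
  exact absurd (deg_nonneg_of_mem_L hx0 hx) (not_le.mpr h)

lemma one_le_ℓ {D : C.Point →₀ ℤ} (h : 0 ≤ D) : 1 ≤ C.ℓ D := by
  rw [Nat.one_le_iff_ne_zero, ← finrank_L, Ne, Submodule.finrank_eq_zero, Submodule.eq_bot_iff]
  exact fun hbot => one_ne_zero (hbot 1 (Or.inr fun P => by rw [v_one, zero_add]; exact h P))

lemma omegaZero_iff_ℓ_eq_zero (D : C.Point →₀ ℤ) :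
    C.OmegaZero D ↔ C.ℓ (C.Kcan - D) = 0 :=
  (C.serre D).symm

lemma OmegaZero.mono {D D' : C.Point →₀ ℤ} (hD : C.OmegaZero D) (h : D ≤ D') :
    C.OmegaZero D' :=
  fun ⟨ω, hω, hD'⟩ => hD ⟨ω, hω, fun P => (h P).trans (hD' P)⟩

lemma OmegaZero.ℓ_eq {D : C.Point →₀ ℤ} (hD : C.OmegaZero D) :
    (C.ℓ D : ℤ) = deg D + 1 - C.genus := by
  have := C.riemannRoch D
  rw [(omegaZero_iff_ℓ_eq_zero D).mp hD] at this
  unfold deg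
  omega

lemma OmegaZero.genus_sub_one_le_deg {D : C.Point →₀ ℤ} (hD : C.OmegaZero D) :
    (C.genus : ℤ) - 1 ≤ deg D := by
  have := hD.ℓ_eq
  omega

lemma OmegaZero.genus_le_deg {D : C.Point →₀ ℤ} (hD : C.OmegaZero D) (h : 0 ≤ D) :
    (C.genus : ℤ) ≤ deg D := by
  have := hD.ℓ_eq
  have := one_le_ℓ (C := C) h
  omega

lemma omegaZero_of_two_mul_genus_sub_two_lt_deg {D : C.Point →₀ ℤ}
    (h : 2 * (C.genus : ℤ) - 2 < deg D) : C.OmegaZero D := by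
  rw [omegaZero_iff_ℓ_eq_zero]
  apply ℓ_eq_zero_of_deg_neg
  have : deg C.Kcan = 2 * (C.genus : ℤ) - 2 := C.deg_Kcan
  rw [deg_sub]
  omega

lemma L_sup_eq_of_omegaZero_inf {D₁ D₂ : C.Point →₀ ℤ} (h : C.OmegaZero (D₁ ⊓ D₂)) :
    C.L D₁ ⊔ C.L D₂ = C.L (D₁ ⊔ D₂) := by
  refine Submodule.eq_of_le_of_finrank_eq
    (sup_le (L_mono le_sup_left) (L_mono le_sup_right)) ?_
  have hdim := Submodule.finrank_sup_add_finrank_inf_eq (C.L D₁) (C.L D₂)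
  rw [← L_inf] at hdim
  simp only [finrank_L] at hdim ⊢
  have h₁ := (h.mono inf_le_left).ℓ_eq
  have h₂ := (h.mono inf_le_right).ℓ_eq
  have h₃ := (h.mono (inf_le_left.trans (le_sup_left : D₁ ≤ D₁ ⊔ D₂))).ℓ_eq
  have h₄ := h.ℓ_eq
  have := deg_sup_add_deg_inf D₁ D₂
  omega

lemma exists_nonneg_mem_L (x : C.K) : ∃ N : C.Point →₀ ℤ, 0 ≤ N ∧ x ∈ C.L N := by
  by_cases hx : x = 0
  · exact ⟨0, le_rfl, Or.inl hx⟩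
  have hfin : (Function.support fun Q => max 0 (-C.v Q x)).Finite :=
    (C.v_finite x hx).subset fun Q hQ h0 => hQ (by simp [show C.v Q x = 0 from h0])
  refine ⟨Finsupp.ofSupportFinite _ hfin, fun Q => ?_, Or.inr fun Q => ?_⟩ <;>
    simp only [Finsupp.ofSupportFinite_coe, Finsupp.coe_zero, Pi.zero_apply] <;> omega

section OnePoint

variable {P : C.Point}

lemma μ_singleton (P : C.Point) :
    C.μ {P} = sInf {n : ℤ | C.OmegaZero (Finsupp.single P n)} := by
  unfold μ
  congr 1
  ext n
  constructor
  · rintro ⟨D, hsupp, hD, rfl⟩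
    rw [← Finset.coe_singleton, Finset.coe_subset, Finsupp.support_subset_singleton] at hsupp
    rw [hsupp, deg_single] at *
    exact hD
  · intro hn
    refine ⟨Finsupp.single P n, ?_, hn, deg_single P n⟩
    rw [← Finset.coe_singleton, Finset.coe_subset]
    exact Finsupp.support_single_subset

lemma omegaZero_single_iff_μ_le {n : ℤ} :
    C.OmegaZero (Finsupp.single P n) ↔ C.μ {P} ≤ n := by
  have hne : {n : ℤ | C.OmegaZero (Finsupp.single P n)}.Nonempty :=
    ⟨2 * C.genus - 1, omegaZero_of_two_mul_genus_sub_two_lt_deg (by rw [deg_single]; omega)⟩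
  have hbdd : BddBelow {n : ℤ | C.OmegaZero (Finsupp.single P n)} :=
    ⟨C.genus - 1, fun m hm => by simpa [deg_single] using hm.genus_sub_one_le_deg⟩
  rw [μ_singleton]
  exact ⟨fun h => csInf_le hbdd h,
    fun h => (Int.csInf_mem hne hbdd).mono (Finsupp.single_le_single.mpr h)⟩

lemma omegaZero_single_μ : C.OmegaZero (Finsupp.single P (C.μ {P})) :=
  omegaZero_single_iff_μ_le.mpr le_rfl

lemma μ_le_two_mul_genus_sub_one : C.μ {P} ≤ 2 * (C.genus : ℤ) - 1 :=
  omegaZero_single_iff_μ_le.mp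
    (omegaZero_of_two_mul_genus_sub_two_lt_deg (by rw [deg_single]; omega))

lemma genus_le_μ (hg : 1 ≤ C.genus) : (C.genus : ℤ) ≤ C.μ {P} := by
  have hμ := (omegaZero_single_μ (P := P)).genus_sub_one_le_deg
  rw [deg_single] at hμ
  simpa [deg_single] using
    omegaZero_single_μ.genus_le_deg (Finsupp.single_nonneg.mpr (by omega))

lemma ℓ_single_of_μ_le {n : ℤ} (h : C.μ {P} ≤ n) :
    (C.ℓ (Finsupp.single P n) : ℤ) = n + 1 - C.genus := by
  simpa [deg_single] using (omegaZero_single_iff_μ_le.mpr h).ℓ_eq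

lemma isGap_μ : C.IsGap P (C.μ {P}) := by
  have hspecial : C.ℓ (C.Kcan - Finsupp.single P (C.μ {P} - 1)) ≠ 0 := by
    rw [Ne, ← omegaZero_iff_ℓ_eq_zero, omegaZero_single_iff_μ_le]
    omega
  have hrr := C.riemannRoch (Finsupp.single P (C.μ {P} - 1))
  have hmono := ℓ_mono (C := C) ((Finsupp.single_le_single (i := P)).mpr
    (sub_le_self (C.μ {P}) zero_le_one))
  have := ℓ_single_of_μ_le (le_refl (C.μ {P}))
  change _ - _ = deg _ + _ - _ at hrr
  rw [deg_single] at hrr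
  unfold IsGap
  omega

lemma le_μ_of_isGap {n : ℤ} (h : C.IsGap P n) : n ≤ C.μ {P} := by
  by_contra hlt
  have h₁ := ℓ_single_of_μ_le (P := P) (n := n) (by omega)
  have h₂ := ℓ_single_of_μ_le (P := P) (n := n - 1) (by omega)
  unfold IsGap at h
  omega

lemma L_single_μ_sub_one :
    C.L (Finsupp.single P (C.μ {P} - 1)) = C.L (Finsupp.single P (C.μ {P})) :=
  L_eq_of_ℓ_eq (Finsupp.single_le_single.mpr (by omega)) isGap_μ.symm

lemma degS_singleton (x : C.K) : C.degS {P} x = -C.v P x := by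
  rw [degS, finsum_mem_singleton]

lemma memOS_of_mem_L_single {n : ℤ} {y : C.K} (hy : y ∈ C.L (Finsupp.single P n)) :
    C.MemOS {P} y := by
  intro hy0 Q hQ
  have := hy.resolve_left hy0 Q
  rwa [Finsupp.single_eq_of_ne hQ, add_zero] at this

lemma mem_L_single_of_memOS {n : ℤ} {y : C.K} (hy : C.MemOS {P} y) (hy0 : y ≠ 0)
    (h : -n ≤ C.v P y) : y ∈ C.L (Finsupp.single P n) := by
  refine Or.inr fun Q => ?_
  by_cases hQ : Q = P
  · subst hQ
    rw [Finsupp.single_eq_same]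
    omega
  · rw [Finsupp.single_eq_of_ne hQ, add_zero]
    exact hy hy0 Q hQ

lemma v_ne_neg_μ_of_memOS {y : C.K} (hy : C.MemOS {P} y) (hy0 : y ≠ 0) :
    C.v P y ≠ -C.μ {P} := by
  intro hv
  have hmem := mem_L_single_of_memOS hy hy0 hv.ge
  rw [← L_single_μ_sub_one] at hmem
  have := hmem.resolve_left hy0 P
  rw [Finsupp.single_eq_same] at this
  omega

lemma exists_memOS_degS_sub_le_μ (x : C.K) :
    ∃ y, C.MemOS {P} y ∧ (x = y ∨ C.degS {P} (x - y) ≤ C.μ {P}) := by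
  obtain ⟨N, hN, hxN⟩ := exists_nonneg_mem_L x
  set μ := C.μ {P}
  set D₁ := Finsupp.single P (max μ (N P))
  set D₂ := N.update P μ
  have hinf : Finsupp.single P μ ≤ D₁ ⊓ D₂ := fun Q => by
    by_cases hQ : Q = P
    · subst hQ; simp [D₁, D₂]
    · simpa [D₁, D₂, Finsupp.update_apply, hQ] using hN Q
  have hsup : N ≤ D₁ ⊔ D₂ := fun Q => by
    by_cases hQ : Q = P
    · subst hQ; simp [D₁, D₂]
    · simp [D₁, D₂, Finsupp.update_apply, hQ]
  have hx : x ∈ C.L D₁ ⊔ C.L D₂ := by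
    rw [L_sup_eq_of_omegaZero_inf (omegaZero_single_μ.mono hinf)]
    exact L_mono hsup hxN
  obtain ⟨y, hy, z, hz, rfl⟩ := Submodule.mem_sup.mp hx
  refine ⟨y, memOS_of_mem_L_single hy, ?_⟩
  rcases hz with rfl | hz
  · simp
  · have := hz P
    simp only [D₂, Finsupp.coe_update, Function.update_self] at this
    right
    rw [add_sub_cancel_left, degS_singleton]
    omega

lemma exists_le_degS_sub_of_memOS :
    ∃ x, ∀ y, C.MemOS {P} y → x ≠ y ∧ C.μ {P} ≤ C.degS {P} (x - y) := by
  obtain ⟨x, hx0, hx⟩ := exists_v_eq P (-C.μ {P})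
  refine ⟨x, fun y hy => ?_⟩
  have hxy : x ≠ y := fun h => v_ne_neg_μ_of_memOS hy (h ▸ hx0) (h ▸ hx)
  refine ⟨hxy, ?_⟩
  rw [degS_singleton]
  by_contra hlt
  have hsub : y - x ≠ 0 := sub_ne_zero.mpr (Ne.symm hxy)
  have hlt' : C.v P x < C.v P (y - x) := by
    rw [← neg_sub, v_neg (sub_ne_zero.mpr hxy)]
    omega
  obtain ⟨hy0, hvy⟩ := v_add_eq_left hx0 hsub hlt'
  rw [add_sub_cancel] at hy0 hvy
  exact v_ne_neg_μ_of_memOS hy hy0 (hvy.trans hx)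

end OnePoint

end AlgCurve

theorem stmt14_general (k : Type) [Field k] (C : AlgCurve k)
    (hg : 1 ≤ C.genus) (P : C.Point) :
    -- M_{{P}}(K) ≤ μ({P}) :
    (∀ x : C.K, ∃ y : C.K, C.MemOS {P} y ∧ (x = y ∨ C.degS {P} (x - y) ≤ C.μ {P})) ∧
    -- M_{{P}}(K) ≥ μ({P}) :
    (∃ x : C.K, ∀ y : C.K, C.MemOS {P} y → x ≠ y ∧ C.μ {P} ≤ C.degS {P} (x - y)) ∧
    -- μ({P}) is the largest Weierstrass gap of P :
    IsGreatest {n : ℤ | 1 ≤ n ∧ C.IsGap P n} (C.μ {P}) ∧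
    -- g ≤ M_{{P}}(K) = μ({P}) ≤ 2g - 1 :
    (C.genus : ℤ) ≤ C.μ {P} ∧ C.μ {P} ≤ 2 * (C.genus : ℤ) - 1 := by
  have hgμ := AlgCurve.genus_le_μ (P := P) hg
  exact ⟨AlgCurve.exists_memOS_degS_sub_le_μ, AlgCurve.exists_le_degS_sub_of_memOS,
    ⟨⟨by omega, AlgCurve.isGap_μ⟩, fun n hn => AlgCurve.le_μ_of_isGap hn.2⟩,
    hgμ, AlgCurve.μ_le_two_mul_genus_sub_one⟩

/-- For `S = {P}` a single point, the Euclidean minimum `M_S(K)` equals the index of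
speciality `μ(P)`, which is the largest Weierstrass gap of `P`; in particular
`g ≤ M_S(K) ≤ 2g - 1`. -/
theorem stmt14 (k : Type) [Field k] [IsAlgClosed k] (C : AlgCurve k)
    (hg : 1 ≤ C.genus) (P : C.Point) :
    -- M_{{P}}(K) ≤ μ({P}) :
    (∀ x : C.K, ∃ y : C.K, C.MemOS {P} y ∧ (x = y ∨ C.degS {P} (x - y) ≤ C.μ {P})) ∧
    -- M_{{P}}(K) ≥ μ({P}) :
    (∃ x : C.K, ∀ y : C.K, C.MemOS {P} y → x ≠ y ∧ C.μ {P} ≤ C.degS {P} (x - y)) ∧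
    -- μ({P}) is the largest Weierstrass gap of P :
    IsGreatest {n : ℤ | 1 ≤ n ∧ C.IsGap P n} (C.μ {P}) ∧
    -- g ≤ M_{{P}}(K) = μ({P}) ≤ 2g - 1 :
    (C.genus : ℤ) ≤ C.μ {P} ∧ C.μ {P} ≤ 2 * (C.genus : ℤ) - 1 :=
  stmt14_general k C hg P
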